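/- Assume packet losses are i.i.d. Bernoulli with parameter p and N ≥ 1. For any fixed media packet k ∈ B, the probability that packet k is lost in the network and is unrecoverable, namely Σ over all subsets S of Fin (N+K) with k ∈ S and |S| > K of p^|S| · (1-p)^{N+K-|S|}, equals (Σ_{i=1}^{N} i · Q(i)) / N. -/

import Mathlib

open Finset


/-- The media block `B`: the first `N` of the `N + K` packet indices. -/
def mediaB (N K : ℕ) : Finset (Fin (N + K)) :=
  Finset.univ.filter (fun i => (i : ℕ) < N)

/-- `U(S)`: the number of unrecoverable losses among the media packets when the set
of packets lost in the network is `S`. Erasure coding recovers everything iff at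
most `K` packets are lost. -/
def unrec (N K : ℕ) (S : Finset (Fin (N + K))) : ℕ :=
  if K < S.card then (S ∩ mediaB N K).card else 0

/-- `Q m`: the probability (under i.i.d. Bernoulli(p) network losses) that exactly
`m` unrecoverable losses remain in the block. -/
noncomputable def Q (N K : ℕ) (p : ℝ) (m : ℕ) : ℝ :=
  ∑ S ∈ Finset.univ.filter (fun S : Finset (Fin (N + K)) => unrec N K S = m),
    p ^ S.card * (1 - p) ^ (N + K - S.card)

/-!
`∑ i, i · Q i` is the expected number of unrecoverable losses. Writing `U(S)` as a sum over media
packets `j` of the indicator of `j ∈ S ∧ K < |S|` turns it into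
`∑ j ∈ B, P(j lost and unrecovered)`. The weight of `S` depends only on `|S|`, so the
transposition of `j` and `k` shows that all these probabilities coincide, and the expectation is
`N` times the one for `k`.
-/

section

variable {α R : Type*}

theorem Finset.sum_card_inter_mul [DecidableEq α] [CommSemiring R] (T : Finset (Finset α))
    (B : Finset α) (g : Finset α → R) :
    ∑ S ∈ T, (#(S ∩ B) : R) * g S = ∑ j ∈ B, ∑ S ∈ T with j ∈ S, g S := by
  simp_rw [inter_comm _ B, ← filter_mem_eq_inter, card_filter, Nat.cast_sum, Nat.cast_ite,
    Nat.cast_one, Nat.cast_zero, sum_mul, ite_mul, one_mul, zero_mul, sum_filter]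
  exact sum_comm

theorem Finset.sum_filter_mem_card_eq [DecidableEq α] [Fintype α] [AddCommMonoid R]
    (P : ℕ → Prop) [DecidablePred P] (f : ℕ → R) (j k : α) :
    ∑ S ∈ univ.filter (fun S : Finset α => j ∈ S ∧ P #S), f #S
      = ∑ S ∈ univ.filter (fun S : Finset α => k ∈ S ∧ P #S), f #S := by
  refine sum_equiv (Equiv.swap j k).finsetCongr (fun S => ?_) (fun S _ => ?_)
  · simp [Equiv.finsetCongr_apply]
  · simp [Equiv.finsetCongr_apply]

theorem Finset.sum_Icc_mul_sum_fiber [Fintype α] [CommSemiring R] (f : α → ℕ) (w : α → R)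
    {N : ℕ} (hf : ∀ x, f x ≤ N) :
    ∑ i ∈ Icc 1 N, (i : R) * ∑ x ∈ univ.filter (fun x => f x = i), w x
      = ∑ x, (f x : R) * w x := by
  have hfiber (i : ℕ) : (i : R) * ∑ x ∈ univ.filter (fun x => f x = i), w x
      = ∑ x ∈ univ.filter (fun x => f x = i), (f x : R) * w x := by
    rw [mul_sum]
    exact sum_congr rfl fun x hx => by rw [(mem_filter.1 hx).2]
  simp_rw [hfiber]
  rw [← sum_fiberwise_of_maps_to (t := range (N + 1))
    fun x _ => mem_range.2 (Nat.lt_succ_of_le (hf x))]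
  refine sum_subset (fun i hi => ?_) (fun i hi hi' => ?_)
  · simp only [mem_Icc, mem_range] at hi ⊢
    omega
  · obtain rfl : i = 0 := by
      simp only [mem_Icc, mem_range, not_and, not_le] at hi hi'
      omega
    exact sum_eq_zero fun x hx => by simp [(mem_filter.1 hx).2]

end

lemma card_mediaB (N K : ℕ) : #(mediaB N K) = N := by
  simp [mediaB, Fin.card_filter_val_lt]

lemma unrec_le (N K : ℕ) (S : Finset (Fin (N + K))) : unrec N K S ≤ N := by
  unfold unrec
  split_ifs
  · exact (card_le_card inter_subset_right).trans (card_mediaB N K).le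
  · exact N.zero_le

lemma sum_unrec_mul {R : Type*} [CommSemiring R] (N K : ℕ) (g : Finset (Fin (N + K)) → R) :
    ∑ S, (unrec N K S : R) * g S
      = ∑ j ∈ mediaB N K,
          ∑ S ∈ univ.filter (fun S : Finset (Fin (N + K)) => j ∈ S ∧ K < #S), g S := by
  calc ∑ S, (unrec N K S : R) * g S
      = ∑ S ∈ univ.filter (fun S : Finset (Fin (N + K)) => K < #S),
          (#(S ∩ mediaB N K) : R) * g S := by
        rw [sum_filter]
        exact sum_congr rfl fun S _ => by unfold unrec; split_ifs <;> simp
    _ = _ := by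
        rw [sum_card_inter_mul]
        simp_rw [filter_filter, and_comm]

theorem stmt_3_general (N K : ℕ) (p : ℝ) (hN : 1 ≤ N)
    (k : Fin (N + K)) :
    ∑ S ∈ Finset.univ.filter (fun S : Finset (Fin (N + K)) => k ∈ S ∧ K < S.card),
      p ^ S.card * (1 - p) ^ (N + K - S.card)
    = (∑ i ∈ Finset.Icc 1 N, (i : ℝ) * Q N K p i) / N := by
  have hN0 : (N : ℝ) ≠ 0 := by positivity
  have hsymm (j : Fin (N + K)) :=
    sum_filter_mem_card_eq (K < ·) (fun n => p ^ n * (1 - p) ^ (N + K - n)) j k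
  unfold Q
  rw [sum_Icc_mul_sum_fiber _ _ (unrec_le N K), sum_unrec_mul, sum_congr rfl fun j _ => hsymm j,
    sum_const, card_mediaB, nsmul_eq_mul]
  field_simp

theorem stmt_3 (N K : ℕ) (p : ℝ) (hp0 : 0 ≤ p) (hp1 : p ≤ 1) (hN : 1 ≤ N)
    (k : Fin (N + K)) (hk : k ∈ mediaB N K) :
    ∑ S ∈ Finset.univ.filter (fun S : Finset (Fin (N + K)) => k ∈ S ∧ K < S.card),
      p ^ S.card * (1 - p) ^ (N + K - S.card)
    = (∑ i ∈ Finset.Icc 1 N, (i : ℝ) * Q N K p i) / N :=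
  stmt_3_general N K p hN k
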